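/- Assume: consistency of joint potential outcomes (S(ω)=s and A(ω)=a implies Y^{s,a}(ω)=Y(ω)) for (s,a) ∈ {(0,0),(0,2),(1,0)}; conditional mean exchangeability over A in the trial for (s,a)=(1,0) with trial positivity for a=0; conditional exchangeability over A in the external data for (s,a)=(0,0) and (0,2) with external treatment positivity for a=0 and a=2; external-source positivity; transportability of the conditional difference effect over S under s=0: E[Y^{0,2} − Y^{0,0} | X=x, S=1] = E[Y^{0,2} − Y^{0,0} | X=x, S=0] whenever both events have positive probability; and no causal interaction between S and A on the difference scale: E[Y^{1,2} − Y^{1,0} | X=x, S=1] = E[Y^{0,2} − Y^{0,0} | X=x, S=1] whenever P(X=x,S=1)>0 and P(X=x,S=0)>0. Then E[Y^{1,2} | S=1] = λ := γ_{0,2} + (γ_{1,0} − γ_{0,0}). -/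

import Mathlib

open Finset
open scoped Classical

noncomputable def pr {Ω : Type*} [Fintype Ω] (P : Ω → ℝ) (E : Ω → Prop) : ℝ :=
  ∑ ω, if E ω then P ω else 0

noncomputable def cexp {Ω : Type*} [Fintype Ω] (P : Ω → ℝ) (Y : Ω → ℝ) (E : Ω → Prop) : ℝ :=
  (∑ ω, if E ω then Y ω * P ω else 0) / pr P E

noncomputable def cpr {Ω : Type*} [Fintype Ω] (P : Ω → ℝ) (E F : Ω → Prop) : ℝ :=
  pr P (fun ω => E ω ∧ F ω) / pr P F

/-!
On a trial stratum `X = x, S = 1`, absence of interaction and transportability of the difference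
effect give `E[Y¹² | x, 1] = E[Y¹⁰ | x, 1] + E[Y⁰² - Y⁰⁰ | x, 0]`, where the external stratum
`X = x, S = 0` is nonempty by external-source positivity. Exchangeability moves each term to the
treatment arm where consistency replaces the potential outcome by `Y`, which identifies the stratum
mean by observed means; the law of total expectation over `X` given `S = 1` then yields `λ`.
-/

section Finite

variable {Ω : Type*} [Fintype Ω] (P : Ω → ℝ)

lemma pr_nonneg (hP : ∀ ω, 0 ≤ P ω) (E : Ω → Prop) : 0 ≤ pr P E :=
  sum_nonneg fun ω _ => by split_ifs <;> simp [hP ω]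

lemma pr_congr {E F : Ω → Prop} (h : ∀ ω, E ω ↔ F ω) : pr P E = pr P F := by
  simp only [pr, h]

lemma pr_pos_of_cpr_pos (hP : ∀ ω, 0 ≤ P ω) {E F : Ω → Prop} (h : 0 < cpr P E F) :
    0 < pr P (fun ω => E ω ∧ F ω) := by
  by_contra! hle
  exact h.not_ge (div_nonpos_of_nonpos_of_nonneg hle (pr_nonneg P hP F))

lemma cexp_congr_of_eqOn {Y Z : Ω → ℝ} {E : Ω → Prop} (h : ∀ ω, E ω → Y ω = Z ω) :
    cexp P Y E = cexp P Z E := by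
  unfold cexp
  congr 1
  exact sum_congr rfl fun ω _ => by split_ifs with hE <;> simp [h ω, hE]

lemma cexp_sub (Y Z : Ω → ℝ) (E : Ω → Prop) :
    cexp P (fun ω => Y ω - Z ω) E = cexp P Y E - cexp P Z E := by
  unfold cexp
  rw [div_sub_div_same, ← sum_sub_distrib]
  congr 1
  exact sum_congr rfl fun ω _ => by split_ifs <;> ring

lemma sum_ite_mul_eq_zero_of_pr_eq_zero (hP : ∀ ω, 0 ≤ P ω) {E : Ω → Prop} (h : pr P E = 0)
    (Y : Ω → ℝ) : ∑ ω, (if E ω then Y ω * P ω else 0) = 0 := by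
  rw [pr, sum_eq_zero_iff_of_nonneg fun ω _ => by split_ifs <;> simp [hP ω]] at h
  refine sum_eq_zero fun ω hω => ?_
  have hPω := h ω hω
  split_ifs at hPω ⊢ with hE
  · simp [hPω]
  · rfl

lemma cexp_eq_sum_cexp_mul_pr_div (hP : ∀ ω, 0 ≤ P ω) {𝓧 : Type*} [Fintype 𝓧] (X : Ω → 𝓧)
    (E : Ω → Prop) (Y : Ω → ℝ) (hE : 0 < pr P E) :
    cexp P Y E = ∑ x ∈ univ.filter (fun x => 0 < pr P (fun ω => X ω = x ∧ E ω)),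
      cexp P Y (fun ω => X ω = x ∧ E ω) * (pr P (fun ω => X ω = x ∧ E ω) / pr P E) := by
  have hsplit : (∑ ω, if E ω then Y ω * P ω else 0)
      = ∑ x, ∑ ω, (if X ω = x ∧ E ω then Y ω * P ω else 0) := by
    rw [sum_comm]
    exact sum_congr rfl fun ω _ => by by_cases h : E ω <;> simp [h]
  have hnull : ∀ x ∈ univ, x ∉ univ.filter (fun x => 0 < pr P (fun ω => X ω = x ∧ E ω)) →
      ∑ ω, (if X ω = x ∧ E ω then Y ω * P ω else 0) = 0 := fun x _ hx => by
    convert sum_ite_mul_eq_zero_of_pr_eq_zero P hP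
      (le_antisymm (not_lt.mp fun h => hx (mem_filter.mpr ⟨mem_univ x, h⟩)) (pr_nonneg P hP _)) Y
  rw [cexp, hsplit, ← sum_subset (filter_subset _ _) hnull, sum_div]
  refine sum_congr rfl fun x hx => ?_
  have hx : 0 < pr P (fun ω => X ω = x ∧ E ω) := (mem_filter.mp hx).2
  rw [cexp]
  field_simp

/-- Identification of the mean of `Y¹²` on a trial stratum `T` from the arm `T₀ ⊆ T` with `A = 0`
and the arms `U₀, U₂` of an external stratum `U`. -/
lemma cexp_eq_of_transport_of_no_interaction {Y Y00 Y02 Y10 Y12 : Ω → ℝ}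
    {T T₀ U U₀ U₂ : Ω → Prop}
    (hcons00 : ∀ ω, U₀ ω → Y00 ω = Y ω) (hcons02 : ∀ ω, U₂ ω → Y02 ω = Y ω)
    (hcons10 : ∀ ω, T₀ ω → Y10 ω = Y ω)
    (hexch10 : cexp P Y10 T = cexp P Y10 T₀) (hexch00 : cexp P Y00 U = cexp P Y00 U₀)
    (hexch02 : cexp P Y02 U = cexp P Y02 U₂)
    (htransdiff : cexp P (fun ω => Y02 ω - Y00 ω) T = cexp P (fun ω => Y02 ω - Y00 ω) U)
    (hnointer : cexp P (fun ω => Y12 ω - Y10 ω) T = cexp P (fun ω => Y02 ω - Y00 ω) T) :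
    cexp P Y12 T = cexp P Y U₂ + (cexp P Y T₀ - cexp P Y U₀) := by
  have hY12 : cexp P Y12 T = cexp P Y10 T + cexp P (fun ω => Y12 ω - Y10 ω) T := by
    rw [cexp_sub]; ring
  rw [hY12, hnointer, htransdiff, cexp_sub, hexch10, hexch02, hexch00,
    cexp_congr_of_eqOn P hcons10, cexp_congr_of_eqOn P hcons02, cexp_congr_of_eqOn P hcons00]
  ring

end Finite

theorem stmt12_general    {Ω 𝓧 : Type*} [Fintype Ω] [Fintype 𝓧]
    (P : Ω → ℝ) (hP : ∀ ω, 0 ≤ P ω)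
    (X : Ω → 𝓧) (S : Ω → ℕ) (A : Ω → ℕ) (Y : Ω → ℝ)
    (Y00 Y02 Y10 Y12 : Ω → ℝ)
    (hS1 : 0 < pr P (fun ω => S ω = 1))
    (hcons00 : ∀ ω, S ω = 0 → A ω = 0 → Y00 ω = Y ω)
    (hcons02 : ∀ ω, S ω = 0 → A ω = 2 → Y02 ω = Y ω)
    (hcons10 : ∀ ω, S ω = 1 → A ω = 0 → Y10 ω = Y ω)
    (hexch10 : ∀ x, 0 < pr P (fun ω => X ω = x ∧ S ω = 1) → cexp P Y10 (fun ω => X ω = x ∧ S ω = 1) = cexp P Y10 (fun ω => X ω = x ∧ S ω = 1 ∧ A ω = 0))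
    (hexch00 : ∀ x, 0 < pr P (fun ω => X ω = x ∧ S ω = 0) → cexp P Y00 (fun ω => X ω = x ∧ S ω = 0) = cexp P Y00 (fun ω => X ω = x ∧ S ω = 0 ∧ A ω = 0))
    (hexch02 : ∀ x, 0 < pr P (fun ω => X ω = x ∧ S ω = 0) → cexp P Y02 (fun ω => X ω = x ∧ S ω = 0) = cexp P Y02 (fun ω => X ω = x ∧ S ω = 0 ∧ A ω = 2))
    (hextpos : ∀ x, 0 < pr P (fun ω => X ω = x ∧ S ω = 1) → 0 < cpr P (fun ω => S ω = 0) (fun ω => X ω = x))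
    (htransdiff : ∀ x, 0 < pr P (fun ω => X ω = x ∧ S ω = 1) → 0 < pr P (fun ω => X ω = x ∧ S ω = 0) →
      cexp P (fun ω => Y02 ω - Y00 ω) (fun ω => X ω = x ∧ S ω = 1) =
      cexp P (fun ω => Y02 ω - Y00 ω) (fun ω => X ω = x ∧ S ω = 0))
    (hnointer : ∀ x, 0 < pr P (fun ω => X ω = x ∧ S ω = 1) → 0 < pr P (fun ω => X ω = x ∧ S ω = 0) →
      cexp P (fun ω => Y12 ω - Y10 ω) (fun ω => X ω = x ∧ S ω = 1) =
      cexp P (fun ω => Y02 ω - Y00 ω) (fun ω => X ω = x ∧ S ω = 1))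
    : cexp P Y12 (fun ω => S ω = 1) =
      (∑ x ∈ univ.filter (fun x => 0 < pr P (fun ω => X ω = x ∧ S ω = 1)),
        cexp P Y (fun ω => X ω = x ∧ S ω = 0 ∧ A ω = 2) * (pr P (fun ω => X ω = x ∧ S ω = 1) / pr P (fun ω => S ω = 1))) +
      ((∑ x ∈ univ.filter (fun x => 0 < pr P (fun ω => X ω = x ∧ S ω = 1)),
        cexp P Y (fun ω => X ω = x ∧ S ω = 1 ∧ A ω = 0) * (pr P (fun ω => X ω = x ∧ S ω = 1) / pr P (fun ω => S ω = 1))) -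
      (∑ x ∈ univ.filter (fun x => 0 < pr P (fun ω => X ω = x ∧ S ω = 1)),
        cexp P Y (fun ω => X ω = x ∧ S ω = 0 ∧ A ω = 0) * (pr P (fun ω => X ω = x ∧ S ω = 1) / pr P (fun ω => S ω = 1)))) := by
  rw [cexp_eq_sum_cexp_mul_pr_div P hP X _ Y12 hS1, ← sum_sub_distrib, ← sum_add_distrib]
  refine sum_congr rfl fun x hx => ?_
  have hx1 : 0 < pr P (fun ω => X ω = x ∧ S ω = 1) := (mem_filter.mp hx).2
  have hx0 : 0 < pr P (fun ω => X ω = x ∧ S ω = 0) :=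
    (pr_pos_of_cpr_pos P hP (hextpos x hx1)).trans_eq (pr_congr P fun _ => and_comm)
  rw [cexp_eq_of_transport_of_no_interaction P (fun ω h => hcons00 ω h.2.1 h.2.2)
    (fun ω h => hcons02 ω h.2.1 h.2.2) (fun ω h => hcons10 ω h.2.1 h.2.2) (hexch10 x hx1)
    (hexch00 x hx0) (hexch02 x hx0) (htransdiff x hx1 hx0) (hnointer x hx1 hx0)]
  ring

theorem stmt12    {Ω 𝓧 : Type*} [Fintype Ω] [Fintype 𝓧]
    (P : Ω → ℝ) (hP : ∀ ω, 0 ≤ P ω) (hPsum : ∑ ω, P ω = 1)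
    (X : Ω → 𝓧) (S : Ω → ℕ) (A : Ω → ℕ) (Y : Ω → ℝ)
    (Y00 Y02 Y10 Y12 : Ω → ℝ)
    (hS1 : 0 < pr P (fun ω => S ω = 1))
    (hcons00 : ∀ ω, S ω = 0 → A ω = 0 → Y00 ω = Y ω)
    (hcons02 : ∀ ω, S ω = 0 → A ω = 2 → Y02 ω = Y ω)
    (hcons10 : ∀ ω, S ω = 1 → A ω = 0 → Y10 ω = Y ω)
    (hexch10 : ∀ x, 0 < pr P (fun ω => X ω = x ∧ S ω = 1) → cexp P Y10 (fun ω => X ω = x ∧ S ω = 1) = cexp P Y10 (fun ω => X ω = x ∧ S ω = 1 ∧ A ω = 0))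
    (hpos0 : ∀ x, 0 < pr P (fun ω => X ω = x ∧ S ω = 1) → 0 < cpr P (fun ω => A ω = 0) (fun ω => X ω = x ∧ S ω = 1))
    (hexch00 : ∀ x, 0 < pr P (fun ω => X ω = x ∧ S ω = 0) → cexp P Y00 (fun ω => X ω = x ∧ S ω = 0) = cexp P Y00 (fun ω => X ω = x ∧ S ω = 0 ∧ A ω = 0))
    (hexch02 : ∀ x, 0 < pr P (fun ω => X ω = x ∧ S ω = 0) → cexp P Y02 (fun ω => X ω = x ∧ S ω = 0) = cexp P Y02 (fun ω => X ω = x ∧ S ω = 0 ∧ A ω = 2))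
    (hposext0 : ∀ x, 0 < pr P (fun ω => X ω = x ∧ S ω = 0) → 0 < cpr P (fun ω => A ω = 0) (fun ω => X ω = x ∧ S ω = 0))
    (hposext2 : ∀ x, 0 < pr P (fun ω => X ω = x ∧ S ω = 0) → 0 < cpr P (fun ω => A ω = 2) (fun ω => X ω = x ∧ S ω = 0))
    (hextpos : ∀ x, 0 < pr P (fun ω => X ω = x ∧ S ω = 1) → 0 < cpr P (fun ω => S ω = 0) (fun ω => X ω = x))
    (htransdiff : ∀ x, 0 < pr P (fun ω => X ω = x ∧ S ω = 1) → 0 < pr P (fun ω => X ω = x ∧ S ω = 0) →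
      cexp P (fun ω => Y02 ω - Y00 ω) (fun ω => X ω = x ∧ S ω = 1) =
      cexp P (fun ω => Y02 ω - Y00 ω) (fun ω => X ω = x ∧ S ω = 0))
    (hnointer : ∀ x, 0 < pr P (fun ω => X ω = x ∧ S ω = 1) → 0 < pr P (fun ω => X ω = x ∧ S ω = 0) →
      cexp P (fun ω => Y12 ω - Y10 ω) (fun ω => X ω = x ∧ S ω = 1) =
      cexp P (fun ω => Y02 ω - Y00 ω) (fun ω => X ω = x ∧ S ω = 1))
    : cexp P Y12 (fun ω => S ω = 1) =
      (∑ x ∈ univ.filter (fun x => 0 < pr P (fun ω => X ω = x ∧ S ω = 1)),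
        cexp P Y (fun ω => X ω = x ∧ S ω = 0 ∧ A ω = 2) * (pr P (fun ω => X ω = x ∧ S ω = 1) / pr P (fun ω => S ω = 1))) +
      ((∑ x ∈ univ.filter (fun x => 0 < pr P (fun ω => X ω = x ∧ S ω = 1)),
        cexp P Y (fun ω => X ω = x ∧ S ω = 1 ∧ A ω = 0) * (pr P (fun ω => X ω = x ∧ S ω = 1) / pr P (fun ω => S ω = 1))) -
      (∑ x ∈ univ.filter (fun x => 0 < pr P (fun ω => X ω = x ∧ S ω = 1)),
        cexp P Y (fun ω => X ω = x ∧ S ω = 0 ∧ A ω = 0) * (pr P (fun ω => X ω = x ∧ S ω = 1) / pr P (fun ω => S ω = 1)))) :=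
  stmt12_general P hP X S A Y Y00 Y02 Y10 Y12 hS1 hcons00 hcons02 hcons10 hexch10 hexch00 hexch02
    hextpos htransdiff hnointer
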